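/- arXiv:1507.08522 — 4 statements merged into one kernel-verified Lean document; each statement's English description precedes it below -/
import Mathlib

section
/- For any three distinct unit vectors $v_1, v_2, v_3$ in $\mathbb{R}^2$, the Coulomb interaction satisfies $\frac{1}{|v_2 - v_1|} + \frac{1}{|v_3 - v_2|} + \frac{1}{|v_1 - v_3|} \geq \sqrt{3}$, with equality if and only if the triangle with vertices $v_1, v_2, v_3$ is equilateral. -/
/-!
For chords `x, y, z` of the unit circle, Heron's formula `16 · area² = 2 ∑ x²y² - ∑ x⁴` and the
circumradius formula `xyz = 4 · R · area` with `R = 1` give the polynomial relation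
`HasUnitCircumradius x y z`; for vectors in the plane it is the vanishing of their Gram determinant.
Under this relation `(xy + yz + zx)² - 3 (xyz)²` equals
`(x - y)² (3/2 (x + y)² - z²) + (y - z)² (3/2 (y + z)² - x²) + (z - x)² (3/2 (z + x)² - y²)`,
whose weights are positive by the triangle inequality. As `1/x + 1/y + 1/z = (xy + yz + zx) / xyz`,
this is the bound, with equality exactly when `x = y = z`.
-/

open Real RealInnerProductSpace

def HasUnitCircumradius (x y z : ℝ) : Prop :=
  x ^ 2 * y ^ 2 * z ^ 2 = 2 * (x ^ 2 * y ^ 2 + y ^ 2 * z ^ 2 + z ^ 2 * x ^ 2) - (x ^ 4 + y ^ 4 + z ^ 4)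

lemma weighted_sum_sq_sub_eq_zero_iff {a b c x y z : ℝ} (ha : 0 < a) (hb : 0 < b) (hc : 0 < c) :
    (x - y) ^ 2 * a + (y - z) ^ 2 * b + (z - x) ^ 2 * c = 0 ↔ x = y ∧ y = z := by
  have hxy : 0 ≤ (x - y) ^ 2 * a := by positivity
  have hyz : 0 ≤ (y - z) ^ 2 * b := by positivity
  have hzx : 0 ≤ (z - x) ^ 2 * c := by positivity
  rw [add_eq_zero_iff_of_nonneg (add_nonneg hxy hyz) hzx, add_eq_zero_iff_of_nonneg hxy hyz]
  simp only [mul_eq_zero, ha.ne', hb.ne', hc.ne', or_false, pow_eq_zero_iff two_ne_zero,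
    sub_eq_zero, and_iff_left_iff_imp]
  rintro ⟨rfl, rfl⟩
  rfl

lemma gram_det_eq_zero_of_fin_two (a b c : EuclideanSpace ℝ (Fin 2)) :
    ‖a‖ ^ 2 * ‖b‖ ^ 2 * ‖c‖ ^ 2 + 2 * ⟪a, b⟫ * ⟪b, c⟫ * ⟪c, a⟫
      - ‖a‖ ^ 2 * ⟪b, c⟫ ^ 2 - ‖b‖ ^ 2 * ⟪c, a⟫ ^ 2 - ‖c‖ ^ 2 * ⟪a, b⟫ ^ 2 = 0 := by
  simp only [← real_inner_self_eq_norm_sq, PiLp.inner_apply, RCLike.inner_apply, conj_trivial,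
    Fin.sum_univ_two]
  ring

lemma hasUnitCircumradius_norm_sub {u v w : EuclideanSpace ℝ (Fin 2)}
    (hu : ‖u‖ = 1) (hv : ‖v‖ = 1) (hw : ‖w‖ = 1) :
    HasUnitCircumradius ‖v - u‖ ‖w - v‖ ‖u - w‖ := by
  have hvu : ‖v - u‖ ^ 2 = 2 - 2 * ⟪u, v⟫ := by
    rw [norm_sub_sq_real, hu, hv, real_inner_comm]; ring
  have hwv : ‖w - v‖ ^ 2 = 2 - 2 * ⟪v, w⟫ := by
    rw [norm_sub_sq_real, hv, hw, real_inner_comm]; ring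
  have huw : ‖u - w‖ ^ 2 = 2 - 2 * ⟪w, u⟫ := by
    rw [norm_sub_sq_real, hu, hw, real_inner_comm]; ring
  have hG := gram_det_eq_zero_of_fin_two u v w
  rw [hu, hv, hw] at hG
  simp only [HasUnitCircumradius, show ∀ r : ℝ, r ^ 4 = (r ^ 2) ^ 2 from fun r => by ring,
    hvu, hwv, huw]
  linear_combination (-4) * hG

namespace HasUnitCircumradius

variable {x y z : ℝ}

lemma rotate (h : HasUnitCircumradius x y z) : HasUnitCircumradius y z x := by
  unfold HasUnitCircumradius at h ⊢
  linear_combination h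

lemma le_add (h : HasUnitCircumradius x y z) (hx : 0 < x) (hy : 0 < y) : z ≤ x + y := by
  by_contra! hlt
  have heron : (x + y + z) * (-x + y + z) * (x - y + z) * (x + y - z) = x ^ 2 * y ^ 2 * z ^ 2 := by
    rw [h]; ring
  have : (x + y + z) * (-x + y + z) * (x - y + z) * (x + y - z) < 0 :=
    mul_neg_of_pos_of_neg (by apply mul_pos; apply mul_pos <;> linarith; linarith) (by linarith)
  nlinarith [sq_nonneg (x * y * z)]

lemma sq_lt (h : HasUnitCircumradius x y z) (hx : 0 < x) (hy : 0 < y) (hz : 0 < z) :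
    z ^ 2 < 3 / 2 * (x + y) ^ 2 := by
  nlinarith [h.le_add hx hy]

lemma mul_add_mul_add_mul_sq_sub_three_mul_sq (h : HasUnitCircumradius x y z) :
    (x * y + y * z + z * x) ^ 2 - 3 * (x * y * z) ^ 2 =
      (x - y) ^ 2 * (3 / 2 * (x + y) ^ 2 - z ^ 2) + (y - z) ^ 2 * (3 / 2 * (y + z) ^ 2 - x ^ 2)
        + (z - x) ^ 2 * (3 / 2 * (z + x) ^ 2 - y ^ 2) := by
  unfold HasUnitCircumradius at h
  linear_combination (-3) * h

lemma sqrt_three_le_inv_add_inv_add_inv (h : HasUnitCircumradius x y z)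
    (hx : 0 < x) (hy : 0 < y) (hz : 0 < z) :
    √3 ≤ 1 / x + 1 / y + 1 / z ∧ (1 / x + 1 / y + 1 / z = √3 ↔ x = y ∧ y = z) := by
  set t := 1 / x + 1 / y + 1 / z
  have ht : 0 ≤ t := by positivity
  have hP : 0 < (x * y * z) ^ 2 := by positivity
  have hw₁ := sub_pos.2 (h.sq_lt hx hy hz)
  have hw₂ := sub_pos.2 (h.rotate.sq_lt hy hz hx)
  have hw₃ := sub_pos.2 (h.rotate.rotate.sq_lt hz hx hy)
  have key : (t ^ 2 - 3) * (x * y * z) ^ 2 = (x * y + y * z + z * x) ^ 2 - 3 * (x * y * z) ^ 2 := by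
    simp only [t]
    field_simp
    ring
  rw [h.mul_add_mul_add_mul_sq_sub_three_mul_sq] at key
  refine ⟨sqrt_le_iff.2 ⟨ht, ?_⟩, ?_⟩
  · have : 0 ≤ (t ^ 2 - 3) * (x * y * z) ^ 2 := by
      rw [key]
      have := mul_nonneg (sq_nonneg (x - y)) hw₁.le
      have := mul_nonneg (sq_nonneg (y - z)) hw₂.le
      have := mul_nonneg (sq_nonneg (z - x)) hw₃.le
      linarith
    linarith [(mul_nonneg_iff_of_pos_right hP).1 this]
  · rw [eq_comm, sqrt_eq_iff_eq_sq (by norm_num) ht, ← weighted_sum_sq_sub_eq_zero_iff hw₁ hw₂ hw₃,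
      ← key, mul_eq_zero, or_iff_left hP.ne', sub_eq_zero, eq_comm]

end HasUnitCircumradius

/-- For three pairwise distinct unit vectors in `ℝ²`, the Coulomb interaction is
at least `√3`, with equality iff the triangle with these vertices is equilateral. -/
theorem coulomb_ge_sqrt_three (v1 v2 v3 : EuclideanSpace ℝ (Fin 2))
    (h1 : ‖v1‖ = 1) (h2 : ‖v2‖ = 1) (h3 : ‖v3‖ = 1)
    (h12 : v1 ≠ v2) (h23 : v2 ≠ v3) (h13 : v1 ≠ v3) :
    Real.sqrt 3 ≤ 1 / ‖v2 - v1‖ + 1 / ‖v3 - v2‖ + 1 / ‖v1 - v3‖ ∧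
    (1 / ‖v2 - v1‖ + 1 / ‖v3 - v2‖ + 1 / ‖v1 - v3‖ = Real.sqrt 3 ↔
      ‖v2 - v1‖ = ‖v3 - v2‖ ∧ ‖v3 - v2‖ = ‖v1 - v3‖) :=
  (hasUnitCircumradius_norm_sub h1 h2 h3).sqrt_three_le_inv_add_inv_add_inv
    (norm_pos_iff.2 (sub_ne_zero.2 h12.symm)) (norm_pos_iff.2 (sub_ne_zero.2 h23.symm))
    (norm_pos_iff.2 (sub_ne_zero.2 h13))
end

section
/- Suppose $0 < r_1^- \leq r_1 \leq r_1^+ < r_2^- \leq r_2 \leq r_2^+$ and $r_3 > r_1^+$, and suppose $\theta_2, \theta_3$ satisfy the stationarity equation $\frac{r_1 r_2 \sin\theta_2}{(r_1^2+r_2^2-2r_1 r_2\cos\theta_2)^{3/2}} + \frac{r_1 r_3 \sin\theta_3}{(r_1^2+r_3^2-2r_1 r_3\cos\theta_3)^{3/2}} = 0$. Then $|\sin\theta_2| \leq \frac{r_1^+(r_1^+ + r_2^+)^3}{r_1^- r_2^-} \cdot \frac{r_3}{(r_3 - r_1^+)^3}$. -/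
/-- A priori bound on `|sin θ2|` along solutions of the stationarity equation. -/
theorem sin_theta2_bound (r1m r1p r2m r2p r1 r2 r3 θ2 θ3 : ℝ)
    (h0 : 0 < r1m) (h1l : r1m ≤ r1) (h1u : r1 ≤ r1p) (hgap : r1p < r2m)
    (h2l : r2m ≤ r2) (h2u : r2 ≤ r2p) (h3 : r1p < r3)
    (heq : r1*r2*Real.sin θ2 / Real.sqrt (r1^2 + r2^2 - 2*r1*r2*Real.cos θ2) ^ 3 +
           r1*r3*Real.sin θ3 / Real.sqrt (r1^2 + r3^2 - 2*r1*r3*Real.cos θ3) ^ 3 = 0) :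
    |Real.sin θ2| ≤ r1p * (r1p + r2p)^3 / (r1m * r2m) * (r3 / (r3 - r1p)^3) := by
  have hr1 : 0 < r1 := lt_of_lt_of_le h0 h1l
  have hr2 : 0 < r2 := by linarith
  have hr3 : 0 < r3 := by linarith
  have hd : 0 < r3 - r1p := by linarith
  set s2 := Real.sqrt (r1^2 + r2^2 - 2*r1*r2*Real.cos θ2) with hs2def
  set s3 := Real.sqrt (r1^2 + r3^2 - 2*r1*r3*Real.cos θ3) with hs3def
  have hcos2 := Real.cos_le_one θ2
  have hcos2' := Real.neg_one_le_cos θ2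
  have hcos3 := Real.cos_le_one θ3
  have hp2 : 0 ≤ r1*r2*(1 - Real.cos θ2) := by
    apply mul_nonneg (by positivity); linarith
  have hp2' : 0 ≤ r1*r2*(1 + Real.cos θ2) := by
    apply mul_nonneg (by positivity); linarith
  have hp3 : 0 ≤ r1*r3*(1 - Real.cos θ3) := by
    apply mul_nonneg (by positivity); linarith
  have hq2 : 0 < (r2 - r1)^2 := pow_pos (by linarith) 2
  have hq3 : 0 < (r3 - r1)^2 := pow_pos (by linarith) 2
  have hs2pos : 0 < s2 := Real.sqrt_pos.2 (by nlinarith)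
  have hs3pos : 0 < s3 := Real.sqrt_pos.2 (by nlinarith)
  have hs2le : s2 ≤ r1p + r2p := by
    rw [hs2def, show r1p + r2p = Real.sqrt ((r1p + r2p)^2) from
      (Real.sqrt_sq (by linarith)).symm]
    apply Real.sqrt_le_sqrt
    nlinarith [sq_nonneg (r1p + r2p - r1 - r2)]
  have hs3ge : r3 - r1p ≤ s3 := by
    have h1 : r3 - r1 = Real.sqrt ((r3 - r1)^2) := (Real.sqrt_sq (by linarith)).symm
    have h2 : Real.sqrt ((r3 - r1)^2) ≤ s3 := Real.sqrt_le_sqrt (by nlinarith)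
    linarith
  clear_value s2 s3
  clear hs2def hs3def
  have heq' : r1*r2*Real.sin θ2 * s3^3 = -(r1*r3*Real.sin θ3) * s2^3 := by
    field_simp at heq
    linarith
  have hsin3 : |Real.sin θ3| ≤ 1 := abs_le.2 ⟨Real.neg_one_le_sin θ3, Real.sin_le_one θ3⟩
  have habs : r1*r2*|Real.sin θ2| * s3^3 ≤ r1*r3 * s2^3 := by
    have h1 : |r1*r2*Real.sin θ2 * s3^3| = |(-(r1*r3*Real.sin θ3)) * s2^3| := by
      rw [heq']
    simp only [abs_mul, abs_neg] at h1
    rw [abs_of_pos hr1, abs_of_pos hr2, abs_of_pos hr3,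
        abs_of_pos (pow_pos hs2pos 3), abs_of_pos (pow_pos hs3pos 3)] at h1
    have h2 : r1 * r3 * |Real.sin θ3| * s2 ^ 3 ≤ r1 * r3 * s2 ^ 3 :=
      mul_le_mul_of_nonneg_right
        (by have := mul_le_mul_of_nonneg_left hsin3 (mul_pos hr1 hr3).le; linarith :
          r1 * r3 * |Real.sin θ3| ≤ r1 * r3)
        (pow_nonneg hs2pos.le 3)
    linarith [h1, h2]
  have hc3 : (r3 - r1p)^3 ≤ s3^3 := pow_le_pow_left₀ hd.le hs3ge 3
  have h12 : r1m * r2m ≤ r1 * r2 := mul_le_mul h1l h2l (by linarith) hr1.le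
  have hA : r1m*r2m*(r3 - r1p)^3 ≤ r1*r2*s3^3 :=
    mul_le_mul h12 hc3 (pow_nonneg hd.le 3) (by positivity)
  have hkey := mul_le_mul_of_nonneg_left hA (abs_nonneg (Real.sin θ2))
  have hB : s2^3 ≤ (r1p + r2p)^3 := pow_le_pow_left₀ hs2pos.le hs2le 3
  have hC : r1 * s2^3 ≤ r1p * (r1p + r2p)^3 :=
    mul_le_mul h1u hB (pow_nonneg hs2pos.le 3) (by linarith)
  have hup : r1 * s2^3 * r3 ≤ r1p * (r1p + r2p)^3 * r3 :=
    mul_le_mul_of_nonneg_right hC hr3.le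
  rw [div_mul_div_comm, le_div_iff₀ (mul_pos (mul_pos h0 (by linarith)) (pow_pos hd 3))]
  linarith [hkey, habs, hup]
end

section
/- Let $0 < r_1 < r_2 < r_3 < r_4 < r_5 < r_6$ and define $c_\pi(a, b, c) = \frac{1}{a+b} + \frac{1}{b+c} + \frac{1}{c-a}$ for the increasingly ordered triple $a < b < c$. Then $c_\pi(r_1, r_4, r_5) + c_\pi(r_2, r_3, r_6) \leq c_\pi(r_1, r_4, r_6) + c_\pi(r_2, r_3, r_5)$. -/
/-- The collinear cost `c_π` of an increasingly ordered triple. -/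
noncomputable def cpi (a b c : ℝ) : ℝ := 1 / (a + b) + 1 / (b + c) + 1 / (c - a)

lemma exchange_aux (x y s t : ℝ) (hx : 0 < x + s) (hy : 0 < y + s) (hxy : x ≤ y)
    (hst : s ≤ t) : 1 / (x + t) + 1 / (y + s) ≤ 1 / (x + s) + 1 / (y + t) := by
  have hxt : 0 < x + t := by linarith
  have hyt : 0 < y + t := by linarith
  rw [div_add_div _ _ (ne_of_gt hxt) (ne_of_gt hy), div_add_div _ _ (ne_of_gt hx) (ne_of_gt hyt),
    div_le_div_iff₀ (by positivity) (by positivity)]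
  nlinarith [mul_nonneg (sub_nonneg.2 hxy) (sub_nonneg.2 hst), hx.le, hy.le, hxt.le, hyt.le]

/-- Exchange inequality for the collinear cost: the pairing `145`–`236` beats
`146`–`235`. -/
theorem cpi_145_236_le_146_235 (r1 r2 r3 r4 r5 r6 : ℝ) (h0 : 0 < r1)
    (h12 : r1 < r2) (h23 : r2 < r3) (h34 : r3 < r4) (h45 : r4 < r5) (h56 : r5 < r6) :
    cpi r1 r4 r5 + cpi r2 r3 r6 ≤ cpi r1 r4 r6 + cpi r2 r3 r5 := by
  unfold cpi
  have k1 : 1 / (r3 + r6) + 1 / (r4 + r5) ≤ 1 / (r3 + r5) + 1 / (r4 + r6) :=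
    exchange_aux r3 r4 r5 r6 (by linarith) (by linarith) h34.le h56.le
  have k2 : 1 / (r5 - r1) + 1 / (r6 - r2) ≤ 1 / (r5 - r2) + 1 / (r6 - r1) := by
    have := exchange_aux r5 r6 (-r2) (-r1) (by linarith) (by linarith) h56.le (by linarith)
    simp only [← sub_eq_add_neg] at this
    linarith
  linarith
end

section
/- Let $0 < r_1 < r_2 < r_3 < r_4 < r_5 < r_6$ and define $c_\pi(a, b, c) = \frac{1}{a+b} + \frac{1}{b+c} + \frac{1}{c-a}$ for $a < b < c$. Then the pairing $\{(r_1, r_4, r_5), (r_2, r_3, r_6)\}$ is optimal among the four pairings considered: $c_\pi(r_1, r_4, r_5) + c_\pi(r_2, r_3, r_6) \leq \min\{\, c_\pi(r_1, r_4, r_6) + c_\pi(r_2, r_3, r_5),\; c_\pi(r_1, r_3, r_6) + c_\pi(r_2, r_4, r_5),\; c_\pi(r_1, r_3, r_5) + c_\pi(r_2, r_4, r_6) \,\}$. -/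
lemma key (x y u v : ℝ) (hx : 0 < x + u) (hxy : x < y) (huv : u < v) :
    1 / (x + v) + 1 / (y + u) ≤ 1 / (x + u) + 1 / (y + v) := by
  have h1 : 0 < x + v := by linarith
  have h2 : 0 < y + u := by linarith
  have h3 : 0 < y + v := by linarith
  rw [div_add_div _ _ (by positivity) (by positivity),
      div_add_div _ _ (by positivity) (by positivity),
      div_le_div_iff₀ (by positivity) (by positivity)]
  nlinarith [mul_pos hx h1, mul_pos h2 h3, mul_pos (sub_pos.2 hxy) (sub_pos.2 huv)]

/-- The pairing `145`–`236` is optimal among the four considered pairings for the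
collinear cost `c_π`. -/
theorem cpi_145_236_optimal (r1 r2 r3 r4 r5 r6 : ℝ) (h0 : 0 < r1)
    (h12 : r1 < r2) (h23 : r2 < r3) (h34 : r3 < r4) (h45 : r4 < r5) (h56 : r5 < r6) :
    cpi r1 r4 r5 + cpi r2 r3 r6 ≤
      min (cpi r1 r4 r6 + cpi r2 r3 r5)
        (min (cpi r1 r3 r6 + cpi r2 r4 r5) (cpi r1 r3 r5 + cpi r2 r4 r6)) := by
  have kA : 1 / (r3 + r6) + 1 / (r4 + r5) ≤ 1 / (r3 + r5) + 1 / (r4 + r6) :=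
    key r3 r4 r5 r6 (by linarith) h34 h56
  have kB : 1 / (r1 + r4) + 1 / (r2 + r3) ≤ 1 / (r1 + r3) + 1 / (r2 + r4) :=
    key r1 r2 r3 r4 (by linarith) h12 h34
  have kD : 1 / (r5 - r1) + 1 / (r6 - r2) ≤ 1 / (r5 - r2) + 1 / (r6 - r1) := by
    have := key r5 r6 (-r2) (-r1) (by linarith) h56 (by linarith)
    simpa [sub_eq_add_neg] using this
  unfold cpi
  refine le_min (by linarith) (le_min (by linarith) (by linarith))
end
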